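/- Let δ ∈ (0, 1/2) and let μ, ν be Borel probability measures on 2^ω that are strongly positive with parameter δ. Let A, B ∈ 2^ω satisfy Φ_{μ→ν}(A) = B, i.e. for every k there is an n with (A↾n)_μ ⊆ (B↾k)_ν, and for each n let g(n) = max{k : (A↾n)_μ ⊆ (B↾k)_ν}. Suppose h₁ ∈ ℝ and h₂ ∈ ℝ with h₂ > 0 are such that −(1/n)·log μ(⟦A↾n⟧) → h₁ and −(1/k)·log ν(⟦B↾k⟧) → h₂. Then limsup_{n→∞} g(n)/n = h₁/h₂. -/

import Mathlib

open Filter MeasureTheory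

/-- The length-`n` initial segment of `X ∈ 2^ω`, as a finite binary string. -/
def seg (X : ℕ → Bool) (n : ℕ) : List Bool := (List.range n).map X

/-- The cylinder `⟦σ⟧` of all sequences extending the string `σ`. -/
def cyl (σ : List Bool) : Set (ℕ → Bool) := {X | seg X σ.length = σ}

/-- `μ` is strongly positive with parameter `δ`:
`μ(⟦σ⌢0⟧)/μ(⟦σ⟧) ∈ [δ, 1−δ]` for every string `σ`. -/
def StronglyPositive (μ : Measure (ℕ → Bool)) (δ : ℝ) : Prop :=
  ∀ σ : List Bool,
    ENNReal.ofReal δ * μ (cyl σ) ≤ μ (cyl (σ ++ [false])) ∧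
    μ (cyl (σ ++ [false])) ≤ ENNReal.ofReal (1 - δ) * μ (cyl σ)

/-- The left endpoint `Σ_{τ <lex σ, |τ|=|σ|} μ(⟦τ⟧)` of the interval `(σ)_μ`. -/
noncomputable def lowerEnd (μ : Measure (ℕ → Bool)) (σ : List Bool) : ℝ :=
  ∑ f : Fin σ.length → Bool,
    if List.Lex (· < ·) (List.ofFn f) σ then (μ (cyl (List.ofFn f))).toReal else 0

/-- The closed interval `(σ)_μ ⊆ [0,1]` associated to the string `σ` and the
measure `μ`, used in the Levin–Kautz conversion procedure. -/
noncomputable def ivl (μ : Measure (ℕ → Bool)) (σ : List Bool) : Set ℝ :=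
  Set.Icc (lowerEnd μ σ) (lowerEnd μ σ + (μ (cyl σ)).toReal)

/-!
The intervals `(A↾n)_μ` and `(B↾k)_ν` are nested and shrink to a common point `x`, while
`a n := μ⟦A↾n⟧` and `b k := ν⟦B↾k⟧` decay like `e^{-n h₁}` and `e^{-k h₂}`. The inclusion
`(A↾n)_μ ⊆ (B↾(g n))_ν` gives `a n ≤ b (g n)`, hence `limsup g n / n ≤ h₁ / h₂`. The reverse
inequality follows once `δ³ b (g n) ≤ a n` for infinitely many `n`. If `B` is eventually
constant, `x` is eventually a common endpoint of all `(B↾k)_ν`, hence also of `(A↾n)_μ`, and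
maximality of `g n` forces `a n > b (g n + 1) ≥ δ b (g n)`. Otherwise, at each switch
`B s ≠ B (s + 1)` the point `x` lies at distance at least `δ² b s` from both ends of `(B↾s)_ν`,
so the first `n` with `a n ≤ δ² b s` has `g n ≥ s` and, by strong positivity, `a n > δ³ b s`.
-/

open Set Topology

lemma seg_length (X : ℕ → Bool) (n : ℕ) : (seg X n).length = n := by
  simp [seg]

lemma seg_succ (X : ℕ → Bool) (n : ℕ) : seg X (n + 1) = seg X n ++ [X n] := by
  simp [seg, List.range_succ]

lemma cyl_nil : cyl [] = univ := by
  ext X; simp [cyl, seg]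

lemma cyl_append (σ : List Bool) (b : Bool) :
    cyl (σ ++ [b]) = cyl σ ∩ {X | X σ.length = b} := by
  ext X
  simp only [cyl, mem_ofPred_eq, mem_inter_iff, List.length_append, List.length_singleton,
    seg_succ]
  constructor
  · intro h
    obtain ⟨h₁, h₂⟩ := List.append_inj h (by simp [seg_length])
    exact ⟨h₁, by simpa using h₂⟩
  · rintro ⟨h₁, rfl⟩
    rw [h₁]

lemma measurableSet_cyl (σ : List Bool) : MeasurableSet (cyl σ) := by
  induction σ using List.reverseRecOn with
  | nil => simp [cyl_nil]
  | append_singleton σ b ih =>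
    rw [cyl_append]
    exact ih.inter (measurableSet_eq_fun (measurable_pi_apply _) measurable_const)

lemma cyl_eq_union (σ : List Bool) : cyl σ = cyl (σ ++ [false]) ∪ cyl (σ ++ [true]) := by
  ext X
  cases h : X σ.length <;> simp [cyl_append, h]

lemma disjoint_cyl_append (σ : List Bool) :
    Disjoint (cyl (σ ++ [false])) (cyl (σ ++ [true])) := by
  rw [Set.disjoint_left, cyl_append, cyl_append]
  exact fun X h₁ h₂ => Bool.false_ne_true (h₁.2.symm.trans h₂.2)

lemma measureReal_cyl_eq_add (μ : Measure (ℕ → Bool)) [IsFiniteMeasure μ] (σ : List Bool) :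
    μ.real (cyl σ) = μ.real (cyl (σ ++ [false])) + μ.real (cyl (σ ++ [true])) := by
  rw [cyl_eq_union σ, measureReal_union (disjoint_cyl_append σ) (measurableSet_cyl _)]

lemma sum_ofFn_succ {M : Type*} [AddCommMonoid M] (n : ℕ) (F : List Bool → M) :
    ∑ f : Fin (n + 1) → Bool, F (List.ofFn f)
      = ∑ f : Fin n → Bool, (F (List.ofFn f ++ [false]) + F (List.ofFn f ++ [true])) := by
  rw [← (Fin.snocEquiv fun _ => Bool).sum_comp, Fintype.sum_prod_type, Fintype.sum_bool,
    ← Finset.sum_add_distrib]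
  refine Finset.sum_congr rfl fun f _ => ?_
  simp only [Fin.snocEquiv_apply, List.ofFn_succ', Fin.snoc_castSucc, Fin.snoc_last,
    List.concat_eq_append]
  exact add_comm _ _

lemma List.lex_append_singleton_iff {α : Type*} {r : α → α → Prop} :
    ∀ {l₁ l₂ : List α}, l₁.length = l₂.length → ∀ c b : α,
      List.Lex r (l₁ ++ [c]) (l₂ ++ [b]) ↔ List.Lex r l₁ l₂ ∨ (l₁ = l₂ ∧ r c b)
  | [], [], _, c, b => by simp [List.lex_singleton_iff]
  | a₁ :: l₁, a₂ :: l₂, h, c, b => by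
    have ih := lex_append_singleton_iff (r := r) (l₁ := l₁) (l₂ := l₂) (by simpa using h) c b
    constructor
    · rintro (_ | h | h)
      · exact Or.inl (List.Lex.rel h)
      · exact (ih.1 h).imp List.Lex.cons fun ⟨he, hc⟩ => ⟨by rw [he], hc⟩
    · rintro ((_ | h | h) | ⟨he, hc⟩)
      · exact List.Lex.rel h
      · exact List.Lex.cons (ih.2 (Or.inl h))
      · obtain ⟨rfl, rfl⟩ := List.cons_eq_cons.mp he
        exact List.Lex.cons (ih.2 (Or.inr ⟨rfl, hc⟩))

section Interval

variable (μ : Measure (ℕ → Bool))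

lemma lowerEnd_eq_sum (σ : List Bool) {n : ℕ} (h : σ.length = n) :
    lowerEnd μ σ = ∑ f : Fin n → Bool,
      if List.Lex (· < ·) (List.ofFn f) σ then μ.real (cyl (List.ofFn f)) else 0 := by
  subst h; rfl

lemma lowerEnd_append [IsFiniteMeasure μ] (σ : List Bool) (b : Bool) :
    lowerEnd μ (σ ++ [b]) = lowerEnd μ σ + if b then μ.real (cyl (σ ++ [false])) else 0 := by
  rw [lowerEnd_eq_sum μ _ (by simp : (σ ++ [b]).length = σ.length + 1), sum_ofFn_succ σ.length
    (fun τ => if List.Lex (· < ·) τ (σ ++ [b]) then μ.real (cyl τ) else 0),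
    lowerEnd_eq_sum μ σ rfl]
  have hterm : ∀ f : Fin σ.length → Bool,
      ((if List.Lex (· < ·) (List.ofFn f ++ [false]) (σ ++ [b])
          then μ.real (cyl (List.ofFn f ++ [false])) else 0) +
        if List.Lex (· < ·) (List.ofFn f ++ [true]) (σ ++ [b])
          then μ.real (cyl (List.ofFn f ++ [true])) else 0) =
      (if List.Lex (· < ·) (List.ofFn f) σ then μ.real (cyl (List.ofFn f)) else 0) +
        if f = σ.get ∧ b = true then μ.real (cyl (σ ++ [false])) else 0 := by
    intro f
    have hf : List.ofFn f = σ ↔ f = σ.get := by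
      rw [← List.ofFn_injective.eq_iff, List.ofFn_get]
    simp only [List.lex_append_singleton_iff (List.length_ofFn (f := f)), hf]
    by_cases hlex : List.Lex (· < ·) (List.ofFn f) σ
    · have hne : f ≠ σ.get := fun he =>
        List.lex_irrefl (fun x : Bool => lt_irrefl x) σ (by rwa [hf.mpr he] at hlex)
      rw [if_pos (Or.inl hlex), if_pos (Or.inl hlex), if_pos hlex, if_neg fun h => hne h.1,
        add_zero, ← measureReal_cyl_eq_add]
    · by_cases he : f = σ.get
      · cases b <;> simp [he]
      · rw [if_neg (by tauto), if_neg (by tauto), if_neg hlex, if_neg (by tauto)]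
  simp only [hterm, Finset.sum_add_distrib, ite_and, Finset.sum_ite_eq', Finset.mem_univ,
    if_true]

noncomputable def upperEnd (σ : List Bool) : ℝ := lowerEnd μ σ + μ.real (cyl σ)

lemma ivl_eq_Icc (σ : List Bool) : ivl μ σ = Icc (lowerEnd μ σ) (upperEnd μ σ) := rfl

lemma lowerEnd_le_upperEnd (σ : List Bool) : lowerEnd μ σ ≤ upperEnd μ σ :=
  le_add_of_nonneg_right measureReal_nonneg

variable [IsFiniteMeasure μ]

lemma lowerEnd_append_false (σ : List Bool) : lowerEnd μ (σ ++ [false]) = lowerEnd μ σ := by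
  simp [lowerEnd_append]

lemma lowerEnd_append_true (σ : List Bool) :
    lowerEnd μ (σ ++ [true]) = upperEnd μ (σ ++ [false]) := by
  simp [lowerEnd_append, upperEnd]

lemma upperEnd_append_true (σ : List Bool) : upperEnd μ (σ ++ [true]) = upperEnd μ σ := by
  rw [upperEnd, lowerEnd_append_true, upperEnd, lowerEnd_append_false, upperEnd,
    measureReal_cyl_eq_add μ σ, add_assoc]

lemma ivl_append_subset (σ : List Bool) (b : Bool) : ivl μ (σ ++ [b]) ⊆ ivl μ σ := by
  rw [ivl_eq_Icc, ivl_eq_Icc]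
  refine Icc_subset_Icc ?_ ?_ <;> cases b
  · rw [lowerEnd_append_false]
  · rw [lowerEnd_append_true, upperEnd, lowerEnd_append_false]
    exact le_add_of_nonneg_right measureReal_nonneg
  · rw [upperEnd, lowerEnd_append_false, upperEnd, measureReal_cyl_eq_add μ σ]
    linarith [measureReal_nonneg (μ := μ) (s := cyl (σ ++ [true]))]
  · rw [upperEnd_append_true]

lemma ivl_seg_antitone (X : ℕ → Bool) : Antitone fun n => ivl μ (seg X n) :=
  antitone_nat_of_succ_le fun n => by
    simpa only [seg_succ] using ivl_append_subset μ (seg X n) (X n)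

lemma exists_forall_mem_ivl_seg (X : ℕ → Bool) : ∃ x, ∀ n, x ∈ ivl μ (seg X n) := by
  obtain ⟨x, hx⟩ := IsCompact.nonempty_iInter_of_sequence_nonempty_isCompact_isClosed
    (fun n => ivl μ (seg X n)) (fun n => ivl_seg_antitone μ X n.le_succ)
    (fun n => nonempty_Icc.mpr (lowerEnd_le_upperEnd μ _)) isCompact_Icc fun _ => isClosed_Icc
  exact ⟨x, mem_iInter.mp hx⟩

end Interval

lemma measureReal_le_of_ivl_subset {μ ν : Measure (ℕ → Bool)} {σ τ : List Bool}
    (h : ivl μ σ ⊆ ivl ν τ) : μ.real (cyl σ) ≤ ν.real (cyl τ) := by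
  rw [ivl_eq_Icc, ivl_eq_Icc, Icc_subset_Icc_iff (lowerEnd_le_upperEnd μ σ), upperEnd,
    upperEnd] at h
  linarith [h.1, h.2]

lemma ivl_subset_of_mem_of_measureReal_le {μ ν : Measure (ℕ → Bool)} {σ τ : List Bool}
    {x d : ℝ} (hxσ : x ∈ ivl μ σ) (hxτ : x ∈ Icc (lowerEnd ν τ + d) (upperEnd ν τ - d))
    (hd : μ.real (cyl σ) ≤ d) : ivl μ σ ⊆ ivl ν τ := by
  rw [ivl_eq_Icc] at hxσ
  rw [ivl_eq_Icc, ivl_eq_Icc]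
  unfold upperEnd at hxσ hxτ ⊢
  exact Icc_subset_Icc (by linarith [hxσ.2, hxτ.1]) (by linarith [hxσ.1, hxτ.2])

lemma measureReal_lt_of_not_ivl_subset {μ ν : Measure (ℕ → Bool)} {σ τ : List Bool}
    (hend : lowerEnd μ σ = lowerEnd ν τ ∨ upperEnd μ σ = upperEnd ν τ)
    (h : ¬ ivl μ σ ⊆ ivl ν τ) : ν.real (cyl τ) < μ.real (cyl σ) := by
  by_contra! hle
  apply h
  rw [ivl_eq_Icc, ivl_eq_Icc]
  unfold upperEnd at hend ⊢
  rcases hend with hL | hU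
  · exact Icc_subset_Icc hL.ge (by linarith)
  · exact Icc_subset_Icc (by linarith) hU.le

lemma measureReal_seg_antitone (μ : Measure (ℕ → Bool)) [IsFiniteMeasure μ] (X : ℕ → Bool) :
    Antitone fun n => μ.real (cyl (seg X n)) :=
  antitone_nat_of_succ_le fun n =>
    measureReal_mono (by rw [seg_succ, cyl_append]; exact inter_subset_left)

namespace StronglyPositive

variable {μ : Measure (ℕ → Bool)} {δ : ℝ}

lemma measureReal_append_bounds [IsFiniteMeasure μ] (hμ : StronglyPositive μ δ) (hδ₀ : 0 ≤ δ)
    (hδ₁ : δ ≤ 1) (σ : List Bool) (b : Bool) :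
    δ * μ.real (cyl σ) ≤ μ.real (cyl (σ ++ [b])) ∧
      μ.real (cyl (σ ++ [b])) ≤ (1 - δ) * μ.real (cyl σ) := by
  have hfalse : δ * μ.real (cyl σ) ≤ μ.real (cyl (σ ++ [false])) ∧
      μ.real (cyl (σ ++ [false])) ≤ (1 - δ) * μ.real (cyl σ) := by
    obtain ⟨hlo, hhi⟩ := hμ σ
    constructor
    · simpa [measureReal_def, ENNReal.toReal_mul, ENNReal.toReal_ofReal hδ₀] using
        ENNReal.toReal_mono (measure_ne_top μ _) hlo
    · simpa [measureReal_def, ENNReal.toReal_mul, ENNReal.toReal_ofReal (sub_nonneg.mpr hδ₁)]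
        using ENNReal.toReal_mono (by finiteness) hhi
  cases b
  · exact hfalse
  · have := measureReal_cyl_eq_add μ σ
    constructor <;> linarith [hfalse.1, hfalse.2]

lemma measureReal_cyl_pos [IsProbabilityMeasure μ] (hμ : StronglyPositive μ δ) (hδ₀ : 0 < δ)
    (hδ₁ : δ ≤ 1) (σ : List Bool) : 0 < μ.real (cyl σ) := by
  induction σ using List.reverseRecOn with
  | nil => simp [cyl_nil]
  | append_singleton σ b ih =>
    exact (mul_pos hδ₀ ih).trans_le (hμ.measureReal_append_bounds hδ₀.le hδ₁ σ b).1

lemma tendsto_measureReal_seg [IsFiniteMeasure μ] (hμ : StronglyPositive μ δ) (hδ₀ : 0 < δ)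
    (hδ₁ : δ ≤ 1) (X : ℕ → Bool) : Tendsto (fun n => μ.real (cyl (seg X n))) atTop (𝓝 0) := by
  have hle : ∀ n, μ.real (cyl (seg X n)) ≤ (1 - δ) ^ n * μ.real univ := by
    intro n
    induction n with
    | zero => simp [seg, cyl_nil]
    | succ n ih =>
      rw [seg_succ, pow_succ']
      calc μ.real (cyl (seg X n ++ [X n])) ≤ (1 - δ) * μ.real (cyl (seg X n)) :=
            (hμ.measureReal_append_bounds hδ₀.le hδ₁ _ _).2
        _ ≤ (1 - δ) * ((1 - δ) ^ n * μ.real univ) := by gcongr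
        _ = _ := by ring
  refine squeeze_zero (fun _ => measureReal_nonneg) hle ?_
  simpa using (tendsto_pow_atTop_nhds_zero_of_lt_one (by linarith) (by linarith)).mul_const
    (μ.real univ)

lemma endpoint_eq_of_eventually_const [IsFiniteMeasure μ] (hμ : StronglyPositive μ δ)
    (hδ₀ : 0 < δ) (hδ₁ : δ ≤ 1) {X : ℕ → Bool} {m₀ : ℕ} (hX : ∀ m ≥ m₀, X m = X m₀) {x : ℝ}
    (hx : ∀ k, x ∈ ivl μ (seg X k)) :
    (∀ k ≥ m₀, lowerEnd μ (seg X k) = x) ∨ (∀ k ≥ m₀, upperEnd μ (seg X k) = x) := by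
  have hm := hμ.tendsto_measureReal_seg hδ₀ hδ₁ X
  cases h : X m₀
  · have hconst : ∀ k ≥ m₀, lowerEnd μ (seg X k) = lowerEnd μ (seg X m₀) := by
      intro k hk
      induction k, hk using Nat.le_induction with
      | base => rfl
      | succ k hk ih => rw [seg_succ, hX k hk, h, lowerEnd_append_false, ih]
    have hx_le : x ≤ lowerEnd μ (seg X m₀) := by
      refine ge_of_tendsto (by simpa using tendsto_const_nhds.add hm) ?_
      filter_upwards [eventually_ge_atTop m₀] with k hk
      rw [← hconst k hk]
      exact (hx k).2
    exact Or.inl fun k hk => (hconst k hk).trans (le_antisymm (hx m₀).1 hx_le)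
  · have hconst : ∀ k ≥ m₀, upperEnd μ (seg X k) = upperEnd μ (seg X m₀) := by
      intro k hk
      induction k, hk using Nat.le_induction with
      | base => rfl
      | succ k hk ih => rw [seg_succ, hX k hk, h, upperEnd_append_true, ih]
    have hx_ge : upperEnd μ (seg X m₀) ≤ x := by
      refine le_of_tendsto (by simpa using tendsto_const_nhds.sub hm) ?_
      filter_upwards [eventually_ge_atTop m₀] with k hk
      rw [← hconst k hk, upperEnd, add_sub_cancel_right]
      exact (hx k).1
    exact Or.inr fun k hk => (hconst k hk).trans (le_antisymm hx_ge (hx m₀).2)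

variable [IsFiniteMeasure μ] (hμ : StronglyPositive μ δ) (hδ₀ : 0 ≤ δ) (hδ₁ : δ ≤ 1)
include hμ hδ₀ hδ₁

lemma lowerEnd_add_le_lowerEnd_append_true (σ : List Bool) :
    lowerEnd μ σ + δ * μ.real (cyl σ) ≤ lowerEnd μ (σ ++ [true]) := by
  rw [lowerEnd_append_true, upperEnd, lowerEnd_append_false]
  linarith [(hμ.measureReal_append_bounds hδ₀ hδ₁ σ false).1]

lemma upperEnd_append_false_le (σ : List Bool) :
    upperEnd μ (σ ++ [false]) ≤ upperEnd μ σ - δ * μ.real (cyl σ) := by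
  rw [upperEnd, lowerEnd_append_false, upperEnd]
  linarith [(hμ.measureReal_append_bounds hδ₀ hδ₁ σ false).2]

lemma ivl_append_append_subset (σ : List Bool) {b b' : Bool} (hb : b ≠ b') :
    ivl μ (σ ++ [b] ++ [b']) ⊆
      Icc (lowerEnd μ σ + δ ^ 2 * μ.real (cyl σ)) (upperEnd μ σ - δ ^ 2 * μ.real (cyl σ)) := by
  have hδδ : δ ^ 2 * μ.real (cyl σ) ≤ δ * μ.real (cyl σ) := by
    have : δ ^ 2 ≤ δ := by nlinarith
    exact mul_le_mul_of_nonneg_right this measureReal_nonneg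
  rw [ivl_eq_Icc]
  cases b <;> cases b' <;> simp only [ne_eq, not_true_eq_false] at hb <;>
    refine Icc_subset_Icc ?_ ?_
  · have h₁ := hμ.lowerEnd_add_le_lowerEnd_append_true hδ₀ hδ₁ (σ ++ [false])
    have h₂ := (hμ.measureReal_append_bounds hδ₀ hδ₁ σ false).1
    rw [lowerEnd_append_false] at h₁
    nlinarith
  · rw [upperEnd_append_true]
    linarith [hμ.upperEnd_append_false_le hδ₀ hδ₁ σ]
  · rw [lowerEnd_append_false]
    linarith [hμ.lowerEnd_add_le_lowerEnd_append_true hδ₀ hδ₁ σ]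
  · have h₁ := hμ.upperEnd_append_false_le hδ₀ hδ₁ (σ ++ [true])
    have h₂ := (hμ.measureReal_append_bounds hδ₀ hδ₁ σ true).1
    rw [upperEnd_append_true] at h₁
    nlinarith

end StronglyPositive

lemma limsup_eq_of_eventually_le_of_frequently_ge {α : Type*} {F : Filter α} [F.NeBot]
    {f R S : α → ℝ} {l : ℝ} (hR : Tendsto R F (𝓝 l)) (hS : Tendsto S F (𝓝 l))
    (hfR : ∀ᶠ x in F, f x ≤ R x) (hSf : ∃ᶠ x in F, S x ≤ f x) : limsup f F = l := by
  have hge : ∀ c < l, ∃ᶠ x in F, c ≤ f x := fun c hc =>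
    (hSf.and_eventually (hS.eventually (lt_mem_nhds hc))).mono fun _ h => (le_of_lt h.2).trans h.1
  have hbdd : F.IsBoundedUnder (· ≤ ·) f := hR.isBoundedUnder_le.mono_le hfR
  have hcobdd : F.IsCoboundedUnder (· ≤ ·) f :=
    IsCoboundedUnder.of_frequently_ge (hge (l - 1) (by linarith))
  apply le_antisymm
  · calc limsup f F ≤ limsup R F := limsup_le_limsup hfR hcobdd hR.isBoundedUnder_le
      _ = l := hR.limsup_eq
  · exact le_of_forall_lt_imp_le_of_dense fun c hc => le_limsup_of_frequently_le (hge c hc) hbdd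

lemma limsup_div_eq_of_log_comparison {u v : ℕ → ℝ} {g : ℕ → ℕ} {h₁ h₂ C : ℝ} (hh₂ : 0 < h₂)
    (hg : Tendsto g atTop atTop) (hu : Tendsto (fun n => u n / n) atTop (𝓝 h₁))
    (hv : Tendsto (fun k => v k / k) atTop (𝓝 h₂)) (hle : ∀ᶠ n in atTop, v (g n) ≤ u n)
    (hge : ∃ᶠ n in atTop, u n ≤ v (g n) + C) :
    limsup (fun n => (g n : ℝ) / n) atTop = h₁ / h₂ := by
  set q : ℕ → ℝ := fun n => v (g n) / g n
  have hq : Tendsto q atTop (𝓝 h₂) := hv.comp hg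
  have hq_pos : ∀ᶠ n in atTop, 0 < q n := hq.eventually (lt_mem_nhds hh₂)
  have hratio : ∀ᶠ n in atTop, (g n : ℝ) / n = v (g n) / n / q n := by
    filter_upwards [hq_pos] with n hn
    have hg₀ : (g n : ℝ) ≠ 0 := fun h => by simp [q, h] at hn
    have hv₀ : v (g n) ≠ 0 := fun h => by simp [q, h] at hn
    simp only [q]
    field_simp
  have hC : Tendsto (fun n : ℕ => (u n - C) / n) atTop (𝓝 h₁) := by
    simpa [sub_div] using hu.sub (tendsto_const_div_atTop_nhds_zero_nat C)
  refine limsup_eq_of_eventually_le_of_frequently_ge (hu.div hq hh₂.ne') (hC.div hq hh₂.ne') ?_ ?_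
  · filter_upwards [hratio, hq_pos, hle] with n hratio hq_pos hle
    rw [hratio, Pi.div_apply]
    gcongr
  · refine (hge.and_eventually (hratio.and hq_pos)).mono fun n ⟨hge, hratio, hq_pos⟩ => ?_
    rw [hratio, Pi.div_apply]
    gcongr
    linarith

lemma exists_gt_mem_Ioc_of_tendsto_zero {a : ℕ → ℝ} {δ t : ℝ} {N : ℕ} (hδ : 0 < δ)
    (ha : Tendsto a atTop (𝓝 0)) (hstep : ∀ n, δ * a n ≤ a (n + 1)) (ht : 0 < t)
    (hN : ∀ n ≤ N, t < a n) : ∃ n > N, a n ∈ Ioc (δ * t) t := by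
  have hex : ∃ n, a n ≤ t := (ha.eventually (ge_mem_nhds ht)).exists
  have hN' : N < Nat.find hex := by
    by_contra! h
    exact (hN _ h).not_ge (Nat.find_spec hex)
  obtain ⟨m, hm⟩ : ∃ m, Nat.find hex = m + 1 := Nat.exists_eq_add_one.mpr (by omega)
  have hm_gt : t < a m := not_le.mp (Nat.find_min hex (by omega))
  refine ⟨Nat.find hex, hN', ?_, Nat.find_spec hex⟩
  rw [hm]
  exact (mul_lt_mul_of_pos_left hm_gt hδ).trans_le (hstep m)

section Conversion

variable {δ : ℝ} {μ ν : Measure (ℕ → Bool)} {A B : ℕ → Bool} {g : ℕ → ℕ}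
  (hAB : ∀ k, ∃ n, ivl μ (seg A n) ⊆ ivl ν (seg B k))
  (hg : ∀ n, ivl μ (seg A n) ⊆ ivl ν (seg B (g n)))
  (hgmax : ∀ n k, ivl μ (seg A n) ⊆ ivl ν (seg B k) → k ≤ g n)

include hAB hg hgmax in
lemma tendsto_atTop_of_ivl_subset [IsFiniteMeasure μ] : Tendsto g atTop atTop := by
  have hmono : Monotone g := fun m n hmn =>
    hgmax n (g m) ((ivl_seg_antitone μ A hmn).trans (hg m))
  refine tendsto_atTop_atTop_of_monotone hmono fun k => ?_
  obtain ⟨n, hn⟩ := hAB k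
  exact ⟨n, hgmax n k hn⟩

include hAB in
lemma exists_forall_mem_ivl_of_ivl_subset [IsFiniteMeasure μ] :
    ∃ x, (∀ n, x ∈ ivl μ (seg A n)) ∧ ∀ k, x ∈ ivl ν (seg B k) := by
  obtain ⟨x, hx⟩ := exists_forall_mem_ivl_seg μ A
  exact ⟨x, hx, fun k => (hAB k).elim fun n hn => hn (hx n)⟩

variable [IsProbabilityMeasure μ] [IsProbabilityMeasure ν] (hμ : StronglyPositive μ δ)
  (hν : StronglyPositive ν δ) (hδ₀ : 0 < δ) (hδ₁ : δ ≤ 1)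

include hAB hg hgmax hν hδ₀ hδ₁ in
lemma eventually_mul_measureReal_le_of_eventually_const {m₀ : ℕ} (hB : ∀ m ≥ m₀, B m = B m₀) :
    ∀ᶠ n in atTop, δ * ν.real (cyl (seg B (g n))) ≤ μ.real (cyl (seg A n)) := by
  obtain ⟨x, hxA, hxB⟩ := exists_forall_mem_ivl_of_ivl_subset hAB
  filter_upwards [(tendsto_atTop_of_ivl_subset hAB hg hgmax).eventually_ge_atTop m₀]
    with n hn
  have hsub := hg n
  rw [ivl_eq_Icc, ivl_eq_Icc, Icc_subset_Icc_iff (lowerEnd_le_upperEnd μ _)] at hsub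
  have hend : lowerEnd μ (seg A n) = lowerEnd ν (seg B (g n + 1)) ∨
      upperEnd μ (seg A n) = upperEnd ν (seg B (g n + 1)) := by
    rcases hν.endpoint_eq_of_eventually_const hδ₀ hδ₁ hB hxB with hL | hU
    · rw [hL _ (by omega)]
      exact Or.inl (le_antisymm (hxA n).1 (hL (g n) hn ▸ hsub.1))
    · rw [hU _ (by omega)]
      exact Or.inr (le_antisymm (hU (g n) hn ▸ hsub.2) (hxA n).2)
  have hlt := measureReal_lt_of_not_ivl_subset hend
    fun h => (g n).not_succ_le_self (hgmax n _ h)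
  rw [seg_succ] at hlt
  exact (hν.measureReal_append_bounds hδ₀.le hδ₁ _ _).1.trans hlt.le

include hAB hgmax hμ hν hδ₀ hδ₁ in
lemma frequently_pow_three_mul_measureReal_le_of_frequently_ne
    (hB : ∀ s₀, ∃ s ≥ s₀, B s ≠ B (s + 1)) :
    ∃ᶠ n in atTop, δ ^ 3 * ν.real (cyl (seg B (g n))) ≤ μ.real (cyl (seg A n)) := by
  obtain ⟨x, hxA, hxB⟩ := exists_forall_mem_ivl_of_ivl_subset hAB
  have hνpos := hν.measureReal_cyl_pos hδ₀ hδ₁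
  rw [frequently_atTop]
  intro N
  have hsmall : ∀ᶠ s in atTop, δ ^ 2 * ν.real (cyl (seg B s)) < μ.real (cyl (seg A N)) := by
    refine ((hν.tendsto_measureReal_seg hδ₀ hδ₁ B).const_mul _).eventually (gt_mem_nhds ?_)
    simpa using hμ.measureReal_cyl_pos hδ₀ hδ₁ (seg A N)
  obtain ⟨s₀, hs₀⟩ := eventually_atTop.mp hsmall
  obtain ⟨s, hs, hBs⟩ := hB s₀
  have hdeep := hν.ivl_append_append_subset hδ₀.le hδ₁ (seg B s) hBs
    (by simpa only [seg_succ] using hxB (s + 2))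
  obtain ⟨n, hnN, hn_lo, hn_hi⟩ := exists_gt_mem_Ioc_of_tendsto_zero hδ₀
    (hμ.tendsto_measureReal_seg hδ₀ hδ₁ A)
    (fun n => by simpa only [seg_succ] using (hμ.measureReal_append_bounds hδ₀.le hδ₁ _ (A n)).1)
    (mul_pos (pow_pos hδ₀ 2) (hνpos _))
    fun n hn => (hs₀ s hs).trans_le (measureReal_seg_antitone μ A hn)
  refine ⟨n, hnN.le, ?_⟩
  have hsg : s ≤ g n := hgmax n s (ivl_subset_of_mem_of_measureReal_le (hxA n) hdeep hn_hi)
  calc δ ^ 3 * ν.real (cyl (seg B (g n))) ≤ δ ^ 3 * ν.real (cyl (seg B s)) :=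
        mul_le_mul_of_nonneg_left (measureReal_seg_antitone ν B hsg) (by positivity)
    _ = δ * (δ ^ 2 * ν.real (cyl (seg B s))) := by ring
    _ ≤ μ.real (cyl (seg A n)) := hn_lo.le

include hAB hg hgmax hμ hν hδ₀ hδ₁ in
lemma frequently_pow_three_mul_measureReal_le :
    ∃ᶠ n in atTop, δ ^ 3 * ν.real (cyl (seg B (g n))) ≤ μ.real (cyl (seg A n)) := by
  by_cases hB : ∀ s₀, ∃ s ≥ s₀, B s ≠ B (s + 1)
  · exact frequently_pow_three_mul_measureReal_le_of_frequently_ne hAB hgmax hμ hν hδ₀ hδ₁ hB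
  push Not at hB
  obtain ⟨m₀, hm₀⟩ := hB
  have hconst : ∀ m ≥ m₀, B m = B m₀ := by
    intro m hm
    induction m, hm using Nat.le_induction with
    | base => rfl
    | succ m hm ih => rw [← hm₀ m hm, ih]
  refine (eventually_mul_measureReal_le_of_eventually_const hAB hg hgmax hν hδ₀ hδ₁
    hconst).frequently.mono fun n hn => le_trans ?_ hn
  exact mul_le_mul_of_nonneg_right (pow_le_of_le_one hδ₀.le hδ₁ (by norm_num)) measureReal_nonneg

end Conversion

/-- Let `μ, ν` be strongly positive (with parameter `δ ∈ (0,1/2)`) Borel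
probability measures on `2^ω`, let `A, B ∈ 2^ω` with `Φ_{μ→ν}(A) = B` (every
interval `(B↾k)_ν` eventually contains `(A↾n)_μ`), and let
`g n = max{k : (A↾n)_μ ⊆ (B↾k)_ν}`.  If `−(1/n)·log μ(⟦A↾n⟧) → h₁` and
`−(1/k)·log ν(⟦B↾k⟧) → h₂ > 0`, then `limsup_n g(n)/n = h₁/h₂`. -/
theorem stmt17 (δ : ℝ) (hδ : δ ∈ Set.Ioo (0 : ℝ) (1 / 2))
    (μ ν : Measure (ℕ → Bool)) [IsProbabilityMeasure μ] [IsProbabilityMeasure ν]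
    (hμ : StronglyPositive μ δ) (hν : StronglyPositive ν δ)
    (A B : ℕ → Bool)
    (hAB : ∀ k : ℕ, ∃ n : ℕ, ivl μ (seg A n) ⊆ ivl ν (seg B k))
    (g : ℕ → ℕ)
    (hg : ∀ n : ℕ, ivl μ (seg A n) ⊆ ivl ν (seg B (g n)))
    (hgmax : ∀ n k : ℕ, ivl μ (seg A n) ⊆ ivl ν (seg B k) → k ≤ g n)
    (h₁ h₂ : ℝ) (hh₂ : 0 < h₂)
    (hA : Tendsto (fun n : ℕ => -Real.log ((μ (cyl (seg A n))).toReal) / n)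
      atTop (nhds h₁))
    (hB : Tendsto (fun k : ℕ => -Real.log ((ν (cyl (seg B k))).toReal) / k)
      atTop (nhds h₂)) :
    limsup (fun n : ℕ => (g n : ℝ) / n) atTop = h₁ / h₂ := by
  obtain ⟨hδ₀, hδ₁⟩ := hδ
  replace hδ₁ : δ ≤ 1 := by linarith
  have hμpos := hμ.measureReal_cyl_pos hδ₀ hδ₁
  have hνpos := hν.measureReal_cyl_pos hδ₀ hδ₁
  refine limsup_div_eq_of_log_comparison (C := -Real.log (δ ^ 3)) hh₂
    (tendsto_atTop_of_ivl_subset hAB hg hgmax) hA hB (Eventually.of_forall fun n => ?_)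
    ((frequently_pow_three_mul_measureReal_le hAB hg hgmax hμ hν hδ₀ hδ₁).mono fun n hn => ?_)
  · exact neg_le_neg (Real.log_le_log (hμpos _) (measureReal_le_of_ivl_subset (hg n)))
  · have := Real.log_le_log (mul_pos (pow_pos hδ₀ 3) (hνpos _)) hn
    rw [Real.log_mul (by positivity) (hνpos _).ne'] at this
    simp only [measureReal_def] at this
    linarith
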